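/- Let C be a weakly increasing word and x a letter. If C contains a letter strictly greater than x, let x' be the smallest such letter and C' the word obtained from C by replacing one occurrence of x' by x and re-sorting; then the concatenation C ++ [x] is Knuth equivalent to [x'] ++ C'. -/

import Mathlib

/-- Elementary Knuth transformations on consecutive triples of letters:
`y z x → y x z` when `x < y ≤ z`, and `x z y → z x y` when `x ≤ y < z`. -/
inductive KnuthStep : List ℕ → List ℕ → Prop
  | k1 (u v : List ℕ) (x y z : ℕ) (h1 : x < y) (h2 : y ≤ z) :
      KnuthStep (u ++ y :: z :: x :: v) (u ++ y :: x :: z :: v)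
  | k2 (u v : List ℕ) (x y z : ℕ) (h1 : x ≤ y) (h2 : y < z) :
      KnuthStep (u ++ x :: z :: y :: v) (u ++ z :: x :: y :: v)

/-- Knuth equivalence: the equivalence relation generated by the elementary
Knuth transformations. -/
def KnuthEquiv : List ℕ → List ℕ → Prop := Relation.EqvGen KnuthStep

/-- The basic bumping rule: if the weakly increasing word `C` contains a
letter strictly greater than `x`, and `x'` is the smallest such letter, and
`C'` is the weakly increasing word whose letters are those of `C` with one
occurrence of `x'` replaced by `x`, then `C ++ [x]` is Knuth equivalent to
`x' :: C'`. -/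
lemma KnuthStep.cons {a b : List ℕ} (c : ℕ) (h : KnuthStep a b) :
    KnuthStep (c :: a) (c :: b) := by
  cases h with
  | k1 u v x y z h1 h2 => exact KnuthStep.k1 (c :: u) v x y z h1 h2
  | k2 u v x y z h1 h2 => exact KnuthStep.k2 (c :: u) v x y z h1 h2

lemma KnuthEquiv.cons {a b : List ℕ} (c : ℕ) (h : KnuthEquiv a b) :
    KnuthEquiv (c :: a) (c :: b) := by
  induction h with
  | rel _ _ h => exact Relation.EqvGen.rel _ _ (h.cons c)
  | refl _ => exact Relation.EqvGen.refl _
  | symm _ _ _ ih => exact ih.symm _ _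
  | trans _ _ _ _ _ ih1 ih2 => exact ih1.trans _ _ _ ih2

lemma KnuthEquiv.append_left {a b : List ℕ} (A : List ℕ) (h : KnuthEquiv a b) :
    KnuthEquiv (A ++ a) (A ++ b) := by
  induction A with
  | nil => simpa using h
  | cons c A ih => exact ih.cons c

lemma moveX (y : ℕ) (B : List ℕ) (x : ℕ) (hxy : x < y) (hB : B.Pairwise (· ≤ ·))
    (hyB : ∀ b ∈ B, y ≤ b) : KnuthEquiv (y :: B ++ [x]) (y :: x :: B) := by
  induction B generalizing y with
  | nil => exact Relation.EqvGen.refl _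
  | cons b B ih =>
    have hyb : y ≤ b := hyB b (by simp)
    have h1 : KnuthEquiv (b :: B ++ [x]) (b :: x :: B) :=
      ih b (lt_of_lt_of_le hxy hyb) hB.of_cons (fun c hc => (List.pairwise_cons.1 hB).1 c hc)
    have h2 : KnuthStep (y :: b :: x :: B) (y :: x :: b :: B) :=
      KnuthStep.k1 [] B x y b hxy hyb
    exact (h1.cons y).trans _ _ _ (Relation.EqvGen.rel _ _ h2)

lemma moveX' (A : List ℕ) (x x' : ℕ) (B : List ℕ) (hA : A.Pairwise (· ≤ ·))
    (hAx : ∀ a ∈ A, a ≤ x) (hxx' : x < x') :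
    KnuthEquiv (A ++ x' :: x :: B) (x' :: A ++ x :: B) := by
  induction A with
  | nil => exact Relation.EqvGen.refl _
  | cons a A ih =>
    have hax : a ≤ x := hAx a (by simp)
    have h1 : KnuthEquiv (A ++ x' :: x :: B) (x' :: A ++ x :: B) :=
      ih hA.of_cons (fun c hc => hAx c (by simp [hc]))
    have h2 : KnuthStep (a :: x' :: A ++ x :: B) (x' :: a :: A ++ x :: B) := by
      cases A with
      | nil => exact KnuthStep.k2 [] B a x x' hax hxx'
      | cons a' A' =>
        have haa' : a ≤ a' := (List.pairwise_cons.1 hA).1 a' (by simp)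
        have ha'x' : a' < x' := lt_of_le_of_lt (hAx a' (by simp)) hxx'
        exact KnuthStep.k2 [] (A' ++ x :: B) a a' x' haa' ha'x'
    exact (h1.cons a).trans _ _ _ (Relation.EqvGen.rel _ _ h2)

theorem bump_knuthEquiv (C : List ℕ) (x x' : ℕ) (hC : C.Pairwise (· ≤ ·))
    (hmem : x' ∈ C) (hgt : x < x') (hmin : ∀ y ∈ C, x < y → x' ≤ y)
    (C' : List ℕ) (hC' : C'.Pairwise (· ≤ ·))
    (hmul : (C' : Multiset ℕ) = x ::ₘ ((C : Multiset ℕ).erase x')) :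
    KnuthEquiv (C ++ [x]) (x' :: C') := by
  classical
  set p : ℕ → Bool := fun a => decide (a ≤ x) with hp
  set A := C.takeWhile p with hA
  set D := C.dropWhile p with hD
  have hCAD : A ++ D = C := List.takeWhile_append_dropWhile
  -- all elements of A are ≤ x
  have hAx : ∀ a ∈ A, a ≤ x := fun a ha => by
    have := List.mem_takeWhile_imp ha
    simpa [hp] using this
  -- x' ∈ D
  have hx'A : x' ∉ A := fun h => absurd (hAx x' h) (not_le.2 hgt)
  have hx'D : x' ∈ D := by
    have : x' ∈ A ++ D := hCAD ▸ hmem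
    rcases List.mem_append.1 this with h | h
    · exact absurd h hx'A
    · exact h
  have hDne : D ≠ [] := fun h => by simp [h] at hx'D
  -- D is sorted
  have hDsorted : D.Pairwise (· ≤ ·) := hC.sublist (List.dropWhile_sublist p)
  -- head of D is x'
  obtain ⟨b, B, hbB⟩ := List.exists_cons_of_ne_nil hDne
  have hxb : x < b := by
    have hdw : C.dropWhile p = b :: B := by rw [← hD, hbB]
    have w : C.dropWhile p ≠ [] := by simp [hdw]
    have h0 := List.head_dropWhile_not p w
    simp only [hdw, List.head_cons] at h0
    simpa [hp] using h0
  have hbC : b ∈ C := by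
    rw [← hCAD]; exact List.mem_append.2 (Or.inr (by simp [hbB]))
  have hbx' : b = x' := by
    have h1 : x' ≤ b := hmin b hbC hxb
    have h2 : b ≤ x' := by
      rw [hbB] at hx'D hDsorted
      rcases List.mem_cons.1 hx'D with h | h
      · exact le_of_eq h.symm
      · exact (List.pairwise_cons.1 hDsorted).1 x' h
    exact le_antisymm h2 h1
  subst hbx'
  rw [hbB] at hDsorted
  have hBge : ∀ c ∈ B, b ≤ c := (List.pairwise_cons.1 hDsorted).1
  have hAsorted : A.Pairwise (· ≤ ·) := hC.sublist (List.takeWhile_sublist p)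
  -- C' = A ++ x :: B
  have hC'eq : C' = A ++ x :: B := by
    have herase : C.erase b = A ++ B := by
      rw [← hCAD, hbB, List.erase_append_right _ hx'A, List.erase_cons_head]
    have hperm : C'.Perm (A ++ x :: B) := by
      rw [← Multiset.coe_eq_coe, hmul, Multiset.coe_erase, herase]
      rw [show (x ::ₘ (↑(A ++ B) : Multiset ℕ)) = ↑(x :: (A ++ B)) from rfl]
      exact Multiset.coe_eq_coe.2 List.perm_middle.symm
    have hsorted2 : (A ++ x :: B).Pairwise (· ≤ ·) := by
      rw [List.pairwise_append]
      refine ⟨hAsorted, ?_, ?_⟩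
      · rw [List.pairwise_cons]
        exact ⟨fun c hc => le_of_lt (lt_of_lt_of_le hxb (hBge c hc)), hDsorted.of_cons⟩
      · intro a ha c hc
        rcases List.mem_cons.1 hc with h | h
        · exact h ▸ hAx a ha
        · exact le_trans (hAx a ha) (le_of_lt (lt_of_lt_of_le hxb (hBge c h)))
    exact List.Perm.eq_of_pairwise' hC' hsorted2 hperm
  -- assemble
  have step1 : KnuthEquiv (b :: B ++ [x]) (b :: x :: B) :=
    moveX b B x hxb hDsorted.of_cons hBge
  have step1' : KnuthEquiv (A ++ (b :: B ++ [x])) (A ++ b :: x :: B) :=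
    step1.append_left A
  have step2 : KnuthEquiv (A ++ b :: x :: B) (b :: A ++ x :: B) :=
    moveX' A x b B hAsorted hAx hxb
  have hfin : C ++ [x] = A ++ (b :: B ++ [x]) := by
    rw [← hCAD, hbB]; simp
  rw [hfin, hC'eq]
  exact step1'.trans _ _ _ step2
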